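/- Let G be a word-representable (i.e., 0-11-representable) simple graph and let e = xy be an edge of G. Then the graph G \ e, obtained from G by deleting the edge e (keeping all vertices), is 1-11-representable. -/

import Mathlib

/-- Number of occurrences of the consecutive pattern 11 in a word,
i.e. the number of positions `i` with `u i = u (i+1)`. -/
def pattern11Count {V : Type*} [DecidableEq V] (u : List V) : ℕ :=
  (u.zip u.tail).countP (fun p => decide (p.1 = p.2))

/-- `w` is a `k`-11-representant of the simple graph `G`: every vertex occurs in `w`,
and two distinct vertices are adjacent iff the subword of `w` induced by them contains
at most `k` occurrences of the consecutive pattern 11. -/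
def IsK11Rep {V : Type*} [DecidableEq V] (G : SimpleGraph V) (k : ℕ) (w : List V) : Prop :=
  (∀ v : V, v ∈ w) ∧
  ∀ x y : V, x ≠ y →
    (G.Adj x y ↔ pattern11Count (w.filter (fun a => decide (a = x ∨ a = y))) ≤ k)

/-- A simple graph is `k`-11-representable if it has a `k`-11-representant. -/
def K11Representable {V : Type*} [DecidableEq V] (G : SimpleGraph V) (k : ℕ) : Prop :=
  ∃ w : List V, IsK11Rep G k w

/-- A graph is `t`-uniformly `k`-11-representable if it has a `k`-11-representant in which
every vertex occurs exactly `t` times. -/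
def UniformK11Rep {V : Type*} [DecidableEq V] (G : SimpleGraph V) (t k : ℕ) : Prop :=
  ∃ w : List V, IsK11Rep G k w ∧ ∀ v : V, w.count v = t

/-- The final permutation `σ(w)`: distinct letters of `w` in order of last occurrence. -/
def finalPerm {V : Type*} [DecidableEq V] (w : List V) : List V := w.dedup

/-- The initial permutation `π(w)`: distinct letters of `w` in order of first occurrence. -/
def initPerm {V : Type*} [DecidableEq V] (w : List V) : List V := (w.reverse.dedup).reverse

/-!
A word-representant `w` of `G` can be made uniform by repeatedly prepending a deficient letter
whose first occurrence is latest. In a uniform representant, `w|_{a,b}` alternates for every edge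
`ab` and has as many `a`s as `b`s, so it starts and ends with different letters and copies of it
concatenate without creating a `11`. Then `w x w y w` is a 1-11-representant of `G \ xy`: for an
edge `ab` of `G` each inserted letter lying in `{a, b}` creates exactly one `11`, so only the pair
`xy` reaches two, while a non-edge already has a `11` in each of the three copies of `w|_{a,b}`.
-/

section

variable {V : Type*} [DecidableEq V]

theorem pattern11Count_cons_cons (a b : V) (l : List V) :
    pattern11Count (a :: b :: l) = pattern11Count (b :: l) + if a = b then 1 else 0 := by
  by_cases h : a = b <;> simp [pattern11Count, h]

theorem pattern11Count_cons (a : V) (l : List V) :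
    pattern11Count (a :: l) = pattern11Count l + if l.head? = some a then 1 else 0 := by
  cases l with
  | nil => rfl
  | cons b l => simp [pattern11Count_cons_cons, eq_comm]

theorem pattern11Count_append_cons (u : List V) (b : V) (v : List V) :
    pattern11Count (u ++ b :: v) =
      pattern11Count u + pattern11Count (b :: v) + if u.getLast? = some b then 1 else 0 := by
  induction u with
  | nil => simp [pattern11Count]
  | cons a u ih =>
    cases u with
    | nil =>
      rw [List.cons_append, List.nil_append, pattern11Count_cons_cons]
      simp [pattern11Count]
    | cons a' u =>
      simp only [List.cons_append, List.getLast?_cons_cons] at ih ⊢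
      rw [pattern11Count_cons_cons, ih, pattern11Count_cons_cons]
      ring

theorem pattern11Count_add_le_append (u v : List V) :
    pattern11Count u + pattern11Count v ≤ pattern11Count (u ++ v) := by
  cases v with
  | nil => simp [pattern11Count]
  | cons b v => rw [pattern11Count_append_cons]; omega

theorem three_mul_pattern11Count_le_sandwich (v m₁ m₂ : List V) :
    3 * pattern11Count v ≤ pattern11Count (v ++ m₁ ++ v ++ m₂ ++ v) := by
  have := pattern11Count_add_le_append (v ++ m₁ ++ v ++ m₂) v
  have := pattern11Count_add_le_append (v ++ m₁ ++ v) m₂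
  have := pattern11Count_add_le_append (v ++ m₁) v
  have := pattern11Count_add_le_append v m₁
  omega

theorem pattern11Count_append_append {u m v : List V} {f l : V} (hfl : f ≠ l)
    (hu : u.getLast? = some l) (hv : v.head? = some f) (hm : ∀ c ∈ m, c = f ∨ c = l)
    (hm₁ : m.length ≤ 1) :
    pattern11Count (u ++ m ++ v) = pattern11Count u + m.length + pattern11Count v := by
  obtain ⟨t, rfl⟩ := List.head?_eq_some_iff.mp hv
  match m, hm, hm₁ with
  | [], _, _ =>
    rw [List.append_nil, pattern11Count_append_cons, hu, if_neg (by simpa using hfl.symm)]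
    rfl
  | [c], hc, _ =>
    rw [List.append_assoc, List.singleton_append, pattern11Count_append_cons, hu,
      pattern11Count_cons_cons]
    rcases hc c (List.mem_singleton_self c) with rfl | rfl <;> grind

theorem count_eq_count_add_of_pattern11Count_eq_zero {a b : V} {t : List V} (hab : a ≠ b)
    (ht : ∀ c ∈ a :: t, c = a ∨ c = b) (h0 : pattern11Count (a :: t) = 0) :
    (a :: t).count a = (a :: t).count b + if (a :: t).getLast? = some a then 1 else 0 := by
  induction t generalizing a b with
  | nil => simp [hab]
  | cons c t ih =>
    rw [pattern11Count_cons_cons] at h0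
    have hca : c ≠ a := fun h => by simp [h] at h0
    obtain rfl : c = b := (ht c (by simp)).resolve_left hca
    have ih := ih hca (fun e he => (ht e (List.mem_cons_of_mem a he)).symm) (by omega)
    obtain ⟨l, hl⟩ := Option.isSome_iff_exists.mp (List.getLast?_isSome.mpr (List.cons_ne_nil c t))
    have hl_mem := ht l (List.mem_cons_of_mem a (List.mem_of_getLast? hl))
    rw [hl] at ih
    rw [List.getLast?_cons_cons, hl, List.count_cons, List.count_cons]
    grind

theorem head?_ne_getLast?_of_count_eq {a b : V} {v : List V} (hab : a ≠ b)
    (hv : ∀ c ∈ v, c = a ∨ c = b) (h0 : pattern11Count v = 0) (hcount : v.count a = v.count b)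
    (hne : v ≠ []) : v.head? ≠ v.getLast? := by
  obtain ⟨f, t, rfl⟩ := List.exists_cons_of_ne_nil hne
  rcases hv f List.mem_cons_self with rfl | rfl
  · have := count_eq_count_add_of_pattern11Count_eq_zero hab hv h0
    split_ifs at this with h <;> [omega; exact fun h' => h h'.symm]
  · have := count_eq_count_add_of_pattern11Count_eq_zero hab.symm (fun c hc => (hv c hc).symm) h0
    split_ifs at this with h <;> [omega; exact fun h' => h h'.symm]

theorem pattern11Count_sandwich {a b : V} {v m₁ m₂ : List V}
    (hv : ∀ c ∈ v, c = a ∨ c = b) (h0 : pattern11Count v = 0) (hne : v ≠ [])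
    (hends : v.head? ≠ v.getLast?) (hm₁ : ∀ c ∈ m₁, c = a ∨ c = b) (hm₂ : ∀ c ∈ m₂, c = a ∨ c = b)
    (hl₁ : m₁.length ≤ 1) (hl₂ : m₂.length ≤ 1) :
    pattern11Count (v ++ m₁ ++ v ++ m₂ ++ v) = m₁.length + m₂.length := by
  obtain ⟨f, hf⟩ := Option.isSome_iff_exists.mp (List.isSome_head?.mpr hne)
  obtain ⟨l, hl⟩ := Option.isSome_iff_exists.mp (List.getLast?_isSome.mpr hne)
  have hfl : f ≠ l := fun h => hends (by rw [hf, hl, h])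
  have hab_fl : ∀ c, c = a ∨ c = b → c = f ∨ c = l := by
    have := hv f (List.mem_of_head? hf)
    have := hv l (List.mem_of_getLast? hl)
    grind
  have hlast (m : List V) : (v ++ m ++ v).getLast? = some l := by
    simp [List.getLast?_append, hl]
  rw [pattern11Count_append_append hfl (hlast m₁) hf (fun c hc => hab_fl c (hm₂ c hc)) hl₂,
    pattern11Count_append_append hfl hl hf (fun c hc => hab_fl c (hm₁ c hc)) hl₁, h0]
  ring

def inducedSubword (w : List V) (a b : V) : List V :=
  w.filter fun e => decide (e = a ∨ e = b)

theorem inducedSubword_comm (w : List V) (a b : V) :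
    inducedSubword w a b = inducedSubword w b a := by
  simp only [inducedSubword, or_comm]

theorem inducedSubword_cons (c : V) (w : List V) (a b : V) :
    inducedSubword (c :: w) a b =
      if c = a ∨ c = b then c :: inducedSubword w a b else inducedSubword w a b := by
  simp [inducedSubword, List.filter_cons]

theorem inducedSubword_append (u v : List V) (a b : V) :
    inducedSubword (u ++ v) a b = inducedSubword u a b ++ inducedSubword v a b :=
  List.filter_append ..

theorem mem_inducedSubword {w : List V} {a b c : V} :
    c ∈ inducedSubword w a b ↔ c ∈ w ∧ (c = a ∨ c = b) := by
  simp [inducedSubword]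

theorem count_inducedSubword_left (w : List V) (a b : V) :
    (inducedSubword w a b).count a = w.count a :=
  List.count_filter (by simp)

theorem count_inducedSubword_right (w : List V) (a b : V) :
    (inducedSubword w a b).count b = w.count b :=
  List.count_filter (by simp)

theorem length_inducedSubword_singleton (x a b : V) :
    (inducedSubword [x] a b).length = if x = a ∨ x = b then 1 else 0 := by
  rw [inducedSubword_cons]; split_ifs <;> rfl

theorem head?_inducedSubword_of_idxOf_lt {w : List V} {c d : V} (hd : d ∈ w)
    (h : w.idxOf d < w.idxOf c) : (inducedSubword w c d).head? = some d := by
  induction w with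
  | nil => simp at hd
  | cons e w ih =>
    rw [inducedSubword_cons]
    by_cases hed : e = d
    · simp [hed]
    by_cases hec : e = c
    · simp [hec, List.idxOf_cons] at h
    simp only [List.idxOf_cons, beq_false_of_ne hed, beq_false_of_ne hec, cond_false] at h
    simp only [hec, hed, or_self, if_false]
    exact ih ((List.mem_cons.mp hd).resolve_left (Ne.symm hed)) (by omega)

theorem IsK11Rep.cons {G : SimpleGraph V} {k : ℕ} {w : List V} (hw : IsK11Rep G k w) {c : V}
    (hc : ∀ d, G.Adj c d → (inducedSubword w c d).head? ≠ some c) : IsK11Rep G k (c :: w) := by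
  refine ⟨fun v => List.mem_cons_of_mem c (hw.1 v), fun a b hab => ?_⟩
  change G.Adj a b ↔ pattern11Count (inducedSubword (c :: w) a b) ≤ k
  rw [hw.2 a b hab, inducedSubword_cons]
  split_ifs with hcab
  · change pattern11Count (inducedSubword w a b) ≤ k ↔ _
    rw [pattern11Count_cons]
    refine ⟨fun hle => ?_, fun hle => by omega⟩
    have hadj : G.Adj a b := (hw.2 a b hab).mpr hle
    have hhead : (inducedSubword w a b).head? ≠ some c := by
      rcases hcab with rfl | rfl
      · exact hc b hadj
      · rw [inducedSubword_comm]; exact hc a hadj.symm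
    simpa [hhead] using hle
  · rfl

theorem IsK11Rep.exists_cons_of_count_lt [Fintype V] {G : SimpleGraph V} {w : List V} {K : ℕ}
    (hw : IsK11Rep G 0 w) (hlt : ∃ v, w.count v < K) :
    ∃ c, w.count c < K ∧ IsK11Rep G 0 (c :: w) := by
  -- Take the deficient letter `c` whose first occurrence is latest. Every neighbour `d` then
  -- precedes `c` in `w|_{c,d}`: a deficient `d` by the choice of `c`, a saturated one because an
  -- alternating word starting with `c` has at least as many `c`s as `d`s.
  obtain ⟨c, hcA, hmax⟩ := (Finset.univ.filter fun v => w.count v < K).exists_max_image w.idxOf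
    (by simpa [Finset.filter_nonempty_iff] using hlt)
  rw [Finset.mem_filter] at hcA
  refine ⟨c, hcA.2, hw.cons fun d hcd hhead => ?_⟩
  by_cases hd : w.count d < K
  · have hidx : w.idxOf d < w.idxOf c :=
      (hmax d (by simpa using hd)).lt_of_ne fun h => hcd.ne ((List.idxOf_inj (hw.1 d)).mp h).symm
    rw [head?_inducedSubword_of_idxOf_lt (hw.1 d) hidx, Option.some_inj] at hhead
    exact hcd.ne hhead.symm
  · have h0 : pattern11Count (inducedSubword w c d) = 0 :=
      Nat.le_zero.mp ((hw.2 c d hcd.ne).mp hcd)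
    obtain ⟨t, ht⟩ := List.head?_eq_some_iff.mp hhead
    have hcount := count_eq_count_add_of_pattern11Count_eq_zero hcd.ne
      (ht ▸ fun e he => (mem_inducedSubword.mp he).2) (ht ▸ h0)
    rw [← ht, count_inducedSubword_left, count_inducedSubword_right] at hcount
    split_ifs at hcount <;> omega

theorem uniformK11Rep_of_isK11Rep_zero [Fintype V] {G : SimpleGraph V} {w : List V} {K : ℕ}
    (hw : IsK11Rep G 0 w) (hK : ∀ v, w.count v ≤ K) : UniformK11Rep G K 0 := by
  by_cases huni : ∀ v, w.count v = K
  · exact ⟨w, hw, huni⟩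
  push Not at huni
  obtain ⟨c, hc, hcw⟩ :=
    hw.exists_cons_of_count_lt (huni.imp fun v hv => (hK v).lt_of_ne hv)
  have hcount (v : V) : (c :: w).count v = w.count v + if c = v then 1 else 0 := by
    simp [List.count_cons]
  exact uniformK11Rep_of_isK11Rep_zero hcw fun v => by
    rw [hcount]; split_ifs with h <;> [exact h ▸ hc; exact hK v]
termination_by ∑ v, (K - w.count v)
decreasing_by
  refine Finset.sum_lt_sum (fun v _ => ?_) ⟨c, Finset.mem_univ c, ?_⟩
  · rw [hcount]; exact Nat.sub_le_sub_left (Nat.le_add_right _ _) K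
  · rw [hcount, if_pos rfl]; omega

end

/-- if `G` is word-representable and `xy` is an edge of `G`, then the
graph obtained from `G` by deleting the edge `xy` is 1-11-representable. -/
theorem k11Representable_deleteEdge {V : Type*} [DecidableEq V] [Fintype V]
    (G : SimpleGraph V) (x y : V) (hxy : G.Adj x y)
    (h : K11Representable G 0) :
    K11Representable (G.deleteEdges {s(x, y)}) 1 := by
  obtain ⟨w₀, hw₀⟩ := h
  obtain ⟨w, hw, hcount⟩ := uniformK11Rep_of_isK11Rep_zero hw₀ (K := Finset.univ.sup w₀.count)
    fun v => Finset.le_sup (f := w₀.count) (Finset.mem_univ v)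
  refine ⟨w ++ [x] ++ w ++ [y] ++ w, fun v => by simp [hw.1 v], fun a b hab => ?_⟩
  change _ ↔ pattern11Count (inducedSubword (w ++ [x] ++ w ++ [y] ++ w) a b) ≤ 1
  rw [SimpleGraph.deleteEdges_adj, Set.mem_singleton_iff, ← Sym2.mem_and_mem_iff hxy.ne]
  simp only [inducedSubword_append]
  by_cases hadj : G.Adj a b
  · have h0 : pattern11Count (inducedSubword w a b) = 0 := Nat.le_zero.mp ((hw.2 a b hab).mp hadj)
    have hv (z : List V) : ∀ c ∈ inducedSubword z a b, c = a ∨ c = b :=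
      fun c hc => (mem_inducedSubword.mp hc).2
    have hne : inducedSubword w a b ≠ [] :=
      List.ne_nil_of_mem (mem_inducedSubword.mpr ⟨hw.1 a, Or.inl rfl⟩)
    have hends := head?_ne_getLast?_of_count_eq hab (hv w) h0
      (by rw [count_inducedSubword_left, count_inducedSubword_right, hcount, hcount]) hne
    rw [pattern11Count_sandwich (hv w) h0 hne hends (hv [x]) (hv [y]) (List.length_filter_le _ _)
      (List.length_filter_le _ _), length_inducedSubword_singleton, length_inducedSubword_singleton]
    simp only [hadj, true_and, Sym2.mem_iff]
    split_ifs <;> simp_all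
  · have h1 : 1 ≤ pattern11Count (inducedSubword w a b) :=
      Nat.one_le_iff_ne_zero.mpr fun h0 => hadj ((hw.2 a b hab).mpr h0.le)
    have := three_mul_pattern11Count_le_sandwich (inducedSubword w a b) (inducedSubword [x] a b)
      (inducedSubword [y] a b)
    simp only [hadj, false_and, false_iff]
    omega
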